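/- arXiv:1211.4283 — 4 statements merged into one kernel-verified Lean document; each statement's English description precedes it below -/
import Mathlib

section
/- For every integer n ≥ 1, the n-dimensional varietal hypercube VQ_n contains no triangles (it has no cycle of length 3). -/
/-!
The leading bit splits `VQ_{n+1}` into two copies of `VQ_n`, and the edges between the copies
form a matching: the neighbour of `z` in the other copy is determined by `z`, since the
relation `I` is the graph of a bijection. A triangle has two vertices in the same copy; the
third one lies either in that copy too, giving a triangle in `VQ_n`, or in the other copy,
where it would have two distinct cross neighbours.
-/

def vqCross (p q : Bool × Bool) : Prop :=
  (p = (false, false) ∧ q = (false, false)) ∨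
  (p = (false, true) ∧ q = (false, true)) ∨
  (p = (true, false) ∧ q = (true, true)) ∨
  (p = (true, true) ∧ q = (true, false))

def vqAdj : (n : ℕ) → (Fin n → Bool) → (Fin n → Bool) → Prop
  | 0, _, _ => False
  | 1, x, y => x ≠ y
  | (n + 2), x, y =>
    if x (Fin.last (n + 1)) = y (Fin.last (n + 1)) then
      -- both in the same copy of `VQ (n+1)`
      vqAdj (n + 1) (fun i => x i.castSucc) (fun i => y i.castSucc)
    else
      if 3 ∣ (n + 2) then
        (∀ i : Fin (n + 2), i.val < n - 1 → x i = y i) ∧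
        vqCross (x ⟨n, by omega⟩, x ⟨n - 1, by omega⟩)
          (y ⟨n, by omega⟩, y ⟨n - 1, by omega⟩)
      else
        ∀ i : Fin (n + 1), x i.castSucc = y i.castSucc

def varietalCube (n : ℕ) : SimpleGraph (Fin n → Bool) :=
  SimpleGraph.fromRel (vqAdj n)

lemma Bool.eq_of_ne_of_ne {a b c : Bool} (ha : a ≠ c) (hb : b ≠ c) : a = b :=
  (Bool.eq_not_of_ne ha).trans (Bool.eq_not_of_ne hb).symm

lemma vqCross_symm {p q : Bool × Bool} : vqCross p q → vqCross q p := by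
  revert p q; unfold vqCross; decide

lemma vqCross_left_unique {p q r : Bool × Bool} : vqCross p r → vqCross q r → p = q := by
  revert p q r; unfold vqCross; decide

namespace varietalCube

lemma eq_of_init_eq {n : ℕ} {x y : Fin (n + 1) → Bool}
    (hlast : x (Fin.last n) = y (Fin.last n)) (hinit : Fin.init x = Fin.init y) : x = y :=
  funext (Fin.lastCases hlast (congrFun hinit))

lemma adj_init_of_last_eq {n : ℕ} {x y : Fin (n + 2) → Bool}
    (hlast : x (Fin.last (n + 1)) = y (Fin.last (n + 1)))
    (hxy : (varietalCube (n + 2)).Adj x y) :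
    (varietalCube (n + 1)).Adj (Fin.init x) (Fin.init y) := by
  obtain ⟨hne, hadj⟩ := (SimpleGraph.fromRel_adj _ _ _).1 hxy
  simp only [vqAdj, if_pos hlast, if_pos hlast.symm] at hadj
  exact (SimpleGraph.fromRel_adj _ _ _).2 ⟨fun h ↦ hne (eq_of_init_eq hlast h), hadj⟩

section Cross

variable {n : ℕ} {x y z : Fin (n + 2) → Bool}

lemma vqAdj_symm_of_last_ne (hlast : x (Fin.last (n + 1)) ≠ z (Fin.last (n + 1)))
    (hxz : vqAdj (n + 2) x z) : vqAdj (n + 2) z x := by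
  simp only [vqAdj, if_neg hlast, if_neg (Ne.symm hlast)] at hxz ⊢
  split_ifs at hxz ⊢
  · exact ⟨fun i hi ↦ (hxz.1 i hi).symm, vqCross_symm hxz.2⟩
  · exact fun i ↦ (hxz i).symm

lemma vqAdj_of_adj_of_last_ne (hlast : x (Fin.last (n + 1)) ≠ z (Fin.last (n + 1)))
    (hxz : (varietalCube (n + 2)).Adj x z) : vqAdj (n + 2) x z :=
  ((SimpleGraph.fromRel_adj _ _ _).1 hxz).2.elim id (vqAdj_symm_of_last_ne (Ne.symm hlast))

lemma eq_of_vqAdj_of_last_ne (hx : x (Fin.last (n + 1)) ≠ z (Fin.last (n + 1)))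
    (hy : y (Fin.last (n + 1)) ≠ z (Fin.last (n + 1)))
    (hxz : vqAdj (n + 2) x z) (hyz : vqAdj (n + 2) y z) : x = y := by
  have hlast : x (Fin.last (n + 1)) = y (Fin.last (n + 1)) := Bool.eq_of_ne_of_ne hx hy
  simp only [vqAdj, if_neg hx, if_neg hy] at hxz hyz
  split_ifs at hxz hyz with h3
  · have hn : 1 ≤ n := by omega
    have hpair := vqCross_left_unique hxz.2 hyz.2
    simp only [Prod.mk.injEq] at hpair
    funext i
    obtain hi | hi | hi | hi : i.val < n - 1 ∨ i.val = n - 1 ∨ i.val = n ∨ i.val = n + 1 := by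
      omega
    · exact (hxz.1 i hi).trans (hyz.1 i hi).symm
    · exact (congrArg x (Fin.ext hi)).trans (hpair.2.trans (congrArg y (Fin.ext hi)).symm)
    · exact (congrArg x (Fin.ext hi)).trans (hpair.1.trans (congrArg y (Fin.ext hi)).symm)
    · exact (congrArg x (Fin.ext hi)).trans (hlast.trans (congrArg y (Fin.ext hi)).symm)
  · exact eq_of_init_eq hlast (funext fun i ↦ (hxz i).trans (hyz i).symm)

lemma not_adj_of_cross {a b c : Fin (n + 2) → Bool}
    (hab : (varietalCube (n + 2)).Adj a b) (hac : (varietalCube (n + 2)).Adj a c)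
    (hbc : (varietalCube (n + 2)).Adj b c)
    (hsame : a (Fin.last (n + 1)) = b (Fin.last (n + 1)))
    (hcross : a (Fin.last (n + 1)) ≠ c (Fin.last (n + 1))) : False :=
  hab.ne <| eq_of_vqAdj_of_last_ne hcross (hsame ▸ hcross)
    (vqAdj_of_adj_of_last_ne hcross hac) (vqAdj_of_adj_of_last_ne (hsame ▸ hcross) hbc)

end Cross

theorem not_triangle : ∀ {n : ℕ} {a b c : Fin n → Bool},
    (varietalCube n).Adj a b → (varietalCube n).Adj a c → (varietalCube n).Adj b c → False
  | 0, a, b, _, hab, _, _ => hab.ne (Subsingleton.elim a b)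
  | 1, a, b, c, hab, hac, hbc => by
    have eval_ne {x y : Fin 1 → Bool} (h : x ≠ y) : x 0 ≠ y 0 :=
      fun h0 ↦ h (funext (Fin.forall_fin_one.2 h0))
    exact eval_ne hbc.ne (Bool.eq_of_ne_of_ne (eval_ne hab.ne).symm (eval_ne hac.ne).symm)
  | n + 2, a, b, c, hab, hac, hbc => by
    by_cases h1 : a (Fin.last (n + 1)) = b (Fin.last (n + 1)) <;>
      by_cases h2 : a (Fin.last (n + 1)) = c (Fin.last (n + 1))
    · exact not_triangle (adj_init_of_last_eq h1 hab) (adj_init_of_last_eq h2 hac)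
        (adj_init_of_last_eq (h1.symm.trans h2) hbc)
    · exact not_adj_of_cross hab hac hbc h1 h2
    · exact not_adj_of_cross hac hab hbc.symm h2 h1
    · exact not_adj_of_cross hbc hab.symm hac.symm
        (Bool.eq_of_ne_of_ne (Ne.symm h1) (Ne.symm h2)) (Ne.symm h1)

theorem cliqueFree_three (n : ℕ) : (varietalCube n).CliqueFree 3 := by
  classical
  rintro s hs
  obtain ⟨a, b, c, hab, hac, hbc, -⟩ := SimpleGraph.is3Clique_iff.1 hs
  exact not_triangle hab hac hbc

end varietalCube

theorem stmt3_general (n : ℕ) :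
    ¬ ∃ (v : Fin n → Bool) (C : (varietalCube n).Walk v v),
        C.IsCycle ∧ C.length = 3 := by
  rw [← SimpleGraph.is3Clique_iff_exists_cycle_length_three]
  rintro ⟨s, hs⟩
  exact varietalCube.cliqueFree_three n s hs

/-- For `n ≥ 1`, the varietal hypercube `VQ_n` contains no cycle of length `3`. -/
theorem stmt3 (n : ℕ) (hn : 1 ≤ n) :
    ¬ ∃ (v : Fin n → Bool) (C : (varietalCube n).Walk v v),
        C.IsCycle ∧ C.length = 3 :=
  stmt3_general n
end

section
/- For every integer n ≥ 2, every edge of the n-dimensional varietal hypercube VQ_n is contained in a cycle of length 4. -/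
namespace SimpleGraph

variable {V W : Type*} {G : SimpleGraph V} {H : SimpleGraph W}

variable (G) in
def LiesOnFourCycle (e : Sym2 V) : Prop :=
  ∃ (v : V) (C : G.Walk v v), C.IsCycle ∧ C.length = 4 ∧ e ∈ C.edges

lemma liesOnFourCycle_of_adj {a b c d : V} (hab : G.Adj a b) (hbc : G.Adj b c)
    (hcd : G.Adj c d) (hda : G.Adj d a) (hac : a ≠ c) (hbd : b ≠ d) :
    G.LiesOnFourCycle s(a, b) := by
  refine ⟨a, .cons hab (.cons hbc (.cons hcd (.cons hda .nil))), ?_, rfl, by simp⟩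
  have := hab.ne; have := hbc.ne; have := hcd.ne; have := hda.ne
  simp only [Walk.isCycle_def, Walk.isTrail_def, Walk.edges_cons, Walk.edges_nil,
    Walk.support_cons, Walk.support_nil, List.tail_cons, List.nodup_cons, List.mem_cons,
    List.not_mem_nil, List.nodup_nil, Sym2.eq_iff]
  grind

lemma LiesOnFourCycle.map (f : G ↪g H) {e : Sym2 V} (h : G.LiesOnFourCycle e) :
    H.LiesOnFourCycle (e.map f) := by
  obtain ⟨v, C, hC, hlen, he⟩ := h
  exact ⟨f v, C.map f.toHom, (Walk.isCycle_map_iff_of_injective f.injective).2 hC,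
    by rw [Walk.length_map, hlen], by rw [Walk.edges_map]; exact List.mem_map_of_mem he⟩

end SimpleGraph

open SimpleGraph Function

def flipBit {n : ℕ} (x : Fin n → Bool) (i : Fin n) : Fin n → Bool :=
  update x i (!x i)

section flipBit

variable {n : ℕ} (x : Fin n → Bool) (i : Fin n)

@[simp]
lemma flipBit_self : flipBit x i i = !x i := update_self ..

lemma flipBit_of_ne {j : Fin n} (h : j ≠ i) : flipBit x i j = x j := update_of_ne h ..

lemma flipBit_ne_self : flipBit x i ≠ x := fun h => by
  simpa using congrFun h i

lemma flipBit_involutive : Involutive (flipBit · i) := fun x => by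
  simp [flipBit]

end flipBit

lemma init_flipBit_castSucc {n : ℕ} {x : Fin (n + 1) → Bool} {i : Fin n} :
    Fin.init (flipBit x i.castSucc) = flipBit (Fin.init x) i :=
  Fin.init_update_castSucc ..

lemma init_flipBit_last {n : ℕ} {x : Fin (n + 1) → Bool} :
    Fin.init (flipBit x (Fin.last n)) = Fin.init x :=
  Fin.init_update_last ..

lemma flipBit_zero_last {n : ℕ} (x : Fin (n + 2) → Bool) :
    flipBit x 0 (Fin.last _) = x (Fin.last _) :=
  flipBit_of_ne x 0 Fin.last_pos.ne'

lemma vqCross_flip_snd {a b c d : Bool} (h : vqCross (a, b) (c, d)) :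
    vqCross (a, !b) (c, !d) := by
  revert a b c d; unfold vqCross; decide

section vqAdj

variable {n : ℕ} {x y : Fin (n + 2) → Bool}

lemma vqAdj_of_last_eq (h : x (Fin.last _) = y (Fin.last _)) :
    vqAdj (n + 2) x y ↔ vqAdj (n + 1) (Fin.init x) (Fin.init y) := by
  rw [vqAdj, if_pos h]; rfl

lemma vqAdj_of_last_ne (h : x (Fin.last _) ≠ y (Fin.last _)) :
    vqAdj (n + 2) x y ↔ if 3 ∣ (n + 2) then
        (∀ i : Fin (n + 2), i.val < n - 1 → x i = y i) ∧
        vqCross (x ⟨n, by omega⟩, x ⟨n - 1, by omega⟩)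
          (y ⟨n, by omega⟩, y ⟨n - 1, by omega⟩)
      else Fin.init x = Fin.init y := by
  rw [vqAdj, if_neg h, funext_iff]; rfl

lemma vqAdj_flipBit_zero_of_last_ne (hl : x (Fin.last _) ≠ y (Fin.last _))
    (hxy : vqAdj (n + 2) x y) : vqAdj (n + 2) (flipBit x 0) (flipBit y 0) := by
  rw [vqAdj_of_last_ne hl] at hxy
  rw [vqAdj_of_last_ne (by rwa [flipBit_zero_last, flipBit_zero_last])]
  split_ifs at hxy ⊢ with h3
  · obtain ⟨hagree, hcross⟩ := hxy
    refine ⟨fun i hi => ?_, ?_⟩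
    · obtain rfl | h0 := eq_or_ne i 0
      · simp [hagree 0 hi]
      · rw [flipBit_of_ne x 0 h0, flipBit_of_ne y 0 h0, hagree i hi]
    -- only in `VQ_3` is the lowest bit one of the bits compared by `I`
    obtain rfl | hn : n = 1 ∨ 2 ≤ n := by omega
    · exact vqCross_flip_snd hcross
    · rwa [flipBit_of_ne x 0, flipBit_of_ne x 0, flipBit_of_ne y 0, flipBit_of_ne y 0] <;>
        simp [Fin.ext_iff] <;> omega
  · rw [← Fin.castSucc_zero, init_flipBit_castSucc, init_flipBit_castSucc, hxy]

lemma vqAdj_flipBit_last_of_last_eq (hl : x (Fin.last _) = y (Fin.last _))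
    (hxy : vqAdj (n + 2) x y) :
    vqAdj (n + 2) (flipBit x (Fin.last _)) (flipBit y (Fin.last _)) := by
  rwa [vqAdj_of_last_eq (by simp [hl]), init_flipBit_last, init_flipBit_last,
    ← vqAdj_of_last_eq hl]

end vqAdj

lemma vqAdj_flipBit_zero : ∀ {n : ℕ} (x : Fin (n + 1) → Bool), vqAdj (n + 1) x (flipBit x 0)
  | 0, x => (flipBit_ne_self x 0).symm
  | n + 1, x => by
    rw [vqAdj_of_last_eq (flipBit_zero_last x).symm, ← Fin.castSucc_zero, init_flipBit_castSucc]
    exact vqAdj_flipBit_zero _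

lemma vqAdj_flipBit_last {n : ℕ} (h3 : ¬ 3 ∣ n + 2) (x : Fin (n + 2) → Bool) :
    vqAdj (n + 2) x (flipBit x (Fin.last _)) := by
  rw [vqAdj_of_last_ne (by simp), if_neg h3, init_flipBit_last]

lemma varietalCube_adj {n : ℕ} {x y : Fin n → Bool} :
    (varietalCube n).Adj x y ↔ x ≠ y ∧ (vqAdj n x y ∨ vqAdj n y x) :=
  fromRel_adj ..

lemma varietalCube_adj_of_vqAdj {n : ℕ} {x y : Fin n → Bool} (hne : x ≠ y) (h : vqAdj n x y) :
    (varietalCube n).Adj x y :=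
  varietalCube_adj.2 ⟨hne, .inl h⟩

lemma varietalCube_adj_map {n : ℕ} {f : (Fin n → Bool) → Fin n → Bool} (hf : Injective f)
    {x y : Fin n → Bool} (hxy : (varietalCube n).Adj x y)
    (hf₁ : vqAdj n x y → vqAdj n (f x) (f y)) (hf₂ : vqAdj n y x → vqAdj n (f y) (f x)) :
    (varietalCube n).Adj (f x) (f y) := by
  obtain ⟨hne, h⟩ := varietalCube_adj.1 hxy
  exact varietalCube_adj.2 ⟨hf.ne hne, h.imp hf₁ hf₂⟩

lemma vqAdj_snoc {n : ℕ} {u w : Fin (n + 1) → Bool} (b : Bool) :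
    vqAdj (n + 2) (Fin.snoc u b) (Fin.snoc w b) ↔ vqAdj (n + 1) u w := by
  rw [vqAdj_of_last_eq (by simp), Fin.init_snoc, Fin.init_snoc]

def snocEmbedding (n : ℕ) (b : Bool) : varietalCube (n + 1) ↪g varietalCube (n + 2) where
  toFun u := Fin.snoc u b
  inj' := Fin.snoc_left_injective (α := fun _ => Bool) b
  map_rel_iff' := by
    simp [varietalCube_adj, (Fin.snoc_left_injective (α := fun _ => Bool) b).ne_iff, vqAdj_snoc]

section varietalCube

variable {n : ℕ} {x y : Fin (n + 2) → Bool}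

lemma varietalCube_liesOnFourCycle_of_last_ne (hl : x (Fin.last _) ≠ y (Fin.last _))
    (hxy : (varietalCube (n + 2)).Adj x y) : (varietalCube (n + 2)).LiesOnFourCycle s(x, y) := by
  have hflip (x : Fin (n + 2) → Bool) : (varietalCube (n + 2)).Adj x (flipBit x 0) :=
    varietalCube_adj_of_vqAdj (flipBit_ne_self x 0).symm (vqAdj_flipBit_zero x)
  have hcross : (varietalCube (n + 2)).Adj (flipBit x 0) (flipBit y 0) :=
    varietalCube_adj_map (flipBit_involutive 0).injective hxy
      (vqAdj_flipBit_zero_of_last_ne hl) (vqAdj_flipBit_zero_of_last_ne hl.symm)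
  refine liesOnFourCycle_of_adj hxy (hflip y) hcross.symm (hflip x).symm ?_ ?_ <;>
    rintro rfl <;> simp [flipBit_zero_last] at hl

lemma varietalCube_liesOnFourCycle_of_last_eq (h3 : ¬ 3 ∣ n + 2)
    (hl : x (Fin.last _) = y (Fin.last _))
    (hxy : (varietalCube (n + 2)).Adj x y) : (varietalCube (n + 2)).LiesOnFourCycle s(x, y) := by
  have hflip (x : Fin (n + 2) → Bool) : (varietalCube (n + 2)).Adj x (flipBit x (Fin.last _)) :=
    varietalCube_adj_of_vqAdj (flipBit_ne_self x _).symm (vqAdj_flipBit_last h3 x)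
  have hcopy : (varietalCube (n + 2)).Adj (flipBit x (Fin.last _)) (flipBit y (Fin.last _)) :=
    varietalCube_adj_map (flipBit_involutive _).injective hxy
      (vqAdj_flipBit_last_of_last_eq hl) (vqAdj_flipBit_last_of_last_eq hl.symm)
  refine liesOnFourCycle_of_adj hxy (hflip y) hcopy.symm (hflip x).symm ?_ ?_ <;>
    rintro rfl <;> simp at hl

end varietalCube

theorem varietalCube_liesOnFourCycle_of_adj :
    ∀ {n : ℕ} {x y : Fin (n + 2) → Bool}, (varietalCube (n + 2)).Adj x y →
      (varietalCube (n + 2)).LiesOnFourCycle s(x, y)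
  | n, x, y, hxy => by
    obtain hl | hl := ne_or_eq (x (Fin.last _)) (y (Fin.last _))
    · exact varietalCube_liesOnFourCycle_of_last_ne hl hxy
    cases n with
    | zero => exact varietalCube_liesOnFourCycle_of_last_eq (by norm_num) hl hxy
    | succ n =>
      set f := snocEmbedding (n + 1) (x (Fin.last _))
      have hx : f (Fin.init x) = x := Fin.snoc_init_self x
      have hy : f (Fin.init y) = y := by simp only [f, hl]; exact Fin.snoc_init_self y
      rw [← hx, ← hy, f.map_adj_iff] at hxy
      rw [← hx, ← hy, ← Sym2.map_mk]
      exact (varietalCube_liesOnFourCycle_of_adj hxy).map f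

/-- For `n ≥ 2`, every edge of `VQ_n` is contained in a cycle of length `4`. -/
theorem stmt5 (n : ℕ) (hn : 2 ≤ n) (e : Sym2 (Fin n → Bool))
    (he : e ∈ (varietalCube n).edgeSet) :
    ∃ (v : Fin n → Bool) (C : (varietalCube n).Walk v v),
      C.IsCycle ∧ C.length = 4 ∧ e ∈ C.edges := by
  obtain ⟨n, rfl⟩ := Nat.exists_eq_add_of_le' hn
  induction e using Sym2.ind with
  | _ x y => exact varietalCube_liesOnFourCycle_of_adj he
end

section
/- For every integer n ≥ 3, every pair of distinct vertices x and y of the n-dimensional varietal hypercube VQ_n, and every integer ℓ with 2^n − 2 ≤ ℓ ≤ 2^n − 1, there exists an xy-path of length ℓ in VQ_n. In particular, VQ_n has a Hamiltonian path between every pair of distinct vertices. -/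
/-!
`VQ_{n+1}` consists of two copies of `VQ_n` joined by the perfect matching `u ↦ σ u` of an
involution `σ` of the vertex set. Let `G` have `N ≥ 3` vertices and paths of lengths `N - 1` and
`N - 2` between any two distinct vertices; then so does the graph on two copies of `G` joined along
`σ`. For `x`, `y` in different copies, follow a Hamiltonian path of the first copy from `x` to some
`w ≠ σ y`, cross to `σ w`, and finish with a path of length `ℓ - N` in the second copy. For `x`,
`y` in the same copy, let `x a` be the first edge of a Hamiltonian `xy`-path: cross to `σ x`, go to
`σ a` along a path of length `ℓ - N` in the other copy, cross back to `a` and finish the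
Hamiltonian path. The base case `VQ_3` is settled by a finite search.
-/

namespace SimpleGraph

variable {V W : Type*}

def IsLongPathConnected [Fintype V] (G : SimpleGraph V) : Prop :=
  ∀ x y : V, x ≠ y → ∀ ℓ, Fintype.card V - 2 ≤ ℓ → ℓ ≤ Fintype.card V - 1 →
    ∃ p : G.Walk x y, p.IsPath ∧ p.length = ℓ

lemma IsLongPathConnected.of_iso [Fintype V] [Fintype W] {G : SimpleGraph V}
    {H : SimpleGraph W} (e : G ≃g H) (hG : G.IsLongPathConnected) : H.IsLongPathConnected := by
  intro x y hxy ℓ h₁ h₂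
  rw [← Fintype.card_congr e.toEquiv] at h₁ h₂
  obtain ⟨p, hp, hlen⟩ := hG (e.symm x) (e.symm y) (e.symm.injective.ne hxy) ℓ h₁ h₂
  refine ⟨(p.map e.toHom).copy (by simp) (by simp), ?_, by simpa using hlen⟩
  exact (Walk.isPath_copy _ _ _).2 (hp.map e.injective)

lemma Walk.exists_isPath_of_isChain {G : SimpleGraph V} {x y : V} {l : List V}
    (hchain : l.IsChain G.Adj) (hnodup : l.Nodup) (hx : l.head? = some x)
    (hy : l.getLast? = some y) : ∃ p : G.Walk x y, p.IsPath ∧ p.length = l.length - 1 := by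
  have hne : l ≠ [] := by rintro rfl; simp at hx
  have hx' : l.head hne = x := by simpa [List.head?_eq_some_head hne] using hx
  have hy' : l.getLast hne = y := by simpa [List.getLast?_eq_some_getLast hne] using hy
  refine ⟨(Walk.ofSupport l hne hchain).copy hx' hy', ?_, by simp⟩
  rw [Walk.isPath_copy, Walk.isPath_def, Walk.support_ofSupport]
  exact hnodup

section DoubleGraph

variable {G : SimpleGraph V} {σ : V → V}

def doubleGraph (G : SimpleGraph V) (σ : V → V) : SimpleGraph (Bool × V) where
  Adj a b := (a.1 = b.1 ∧ G.Adj a.2 b.2) ∨ (a.1 ≠ b.1 ∧ (b.2 = σ a.2 ∨ a.2 = σ b.2))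
  symm := ⟨by
    rintro _ _ (⟨h₁, h₂⟩ | ⟨h₁, h₂⟩)
    · exact Or.inl ⟨h₁.symm, h₂.symm⟩
    · exact Or.inr ⟨h₁.symm, h₂.symm⟩⟩
  loopless := ⟨by
    rintro ⟨_, u⟩ (⟨_, h⟩ | ⟨h, _⟩)
    exacts [G.loopless.irrefl u h, h rfl]⟩

lemma doubleGraph_adj {a a' : Bool × V} : (G.doubleGraph σ).Adj a a' ↔
    (a.1 = a'.1 ∧ G.Adj a.2 a'.2) ∨ (a.1 ≠ a'.1 ∧ (a'.2 = σ a.2 ∨ a.2 = σ a'.2)) := Iff.rfl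

-- Reducible, so that lemmas about `Walk.append` apply to `crossWalk`, whose middle edge is typed
-- at `(b, w)` rather than at `doubleGraph.copy G σ b w`.
abbrev doubleGraph.copy (G : SimpleGraph V) (σ : V → V) (b : Bool) : G →g G.doubleGraph σ where
  toFun := Prod.mk b
  map_rel' h := Or.inl ⟨rfl, h⟩

lemma doubleGraph.adj_cross {b : Bool} {u : V} : (G.doubleGraph σ).Adj (b, u) (!b, σ u) :=
  Or.inr ⟨by simp, Or.inl rfl⟩

def crossWalk {b b' : Bool} {u w w' v : V} (P : G.Walk u w)
    (h : (G.doubleGraph σ).Adj (b, w) (b', w')) (Q : G.Walk w' v) :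
    (G.doubleGraph σ).Walk (b, u) (b', v) :=
  (P.map (doubleGraph.copy G σ b)).append (.cons h (Q.map (doubleGraph.copy G σ b')))

variable {b b' : Bool} {u w w' v : V} {P : G.Walk u w}
  {h : (G.doubleGraph σ).Adj (b, w) (b', w')} {Q : G.Walk w' v}

lemma length_crossWalk : (crossWalk P h Q).length = P.length + Q.length + 1 := by
  simp only [crossWalk, Walk.length_append, Walk.length_cons, Walk.length_map]
  omega

lemma support_crossWalk :
    (crossWalk P h Q).support = P.support.map (Prod.mk b) ++ Q.support.map (Prod.mk b') := by
  simp only [crossWalk, Walk.support_append, Walk.support_cons, Walk.support_map, List.tail_cons]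
  rfl

lemma isPath_crossWalk (hb : b ≠ b') (hP : P.IsPath) (hQ : Q.IsPath) :
    (crossWalk P h Q).IsPath := by
  rw [Walk.isPath_def, support_crossWalk, List.nodup_append]
  refine ⟨hP.support_nodup.map (Prod.mk_right_injective b),
    hQ.support_nodup.map (Prod.mk_right_injective b'), ?_⟩
  intro z hz z' hz' hzz'
  obtain ⟨_, _, rfl⟩ := List.mem_map.1 hz
  obtain ⟨_, _, rfl⟩ := List.mem_map.1 hz'
  exact hb (congrArg Prod.fst hzz')

end DoubleGraph

variable [Fintype V] {G : SimpleGraph V} {σ : V → V}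

lemma IsLongPathConnected.exists_isPath_doubleGraph_of_ne (hG : G.IsLongPathConnected)
    (hσ : σ.Involutive) (hcard : 3 ≤ Fintype.card V) {b b' : Bool} (hb : b ≠ b') (u v : V)
    {ℓ : ℕ} (h₁ : 2 * Fintype.card V - 2 ≤ ℓ) (h₂ : ℓ ≤ 2 * Fintype.card V - 1) :
    ∃ p : (G.doubleGraph σ).Walk (b, u) (b', v), p.IsPath ∧ p.length = ℓ := by
  obtain ⟨w, hwu, hwv⟩ := ENat.exists_ne_ne_of_three_le
    (by rw [ENat.card_eq_coe_fintype_card]; exact_mod_cast hcard) u (σ v)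
  obtain ⟨P, hP, hPlen⟩ := hG u w hwu.symm _ (by omega) le_rfl
  obtain ⟨Q, hQ, hQlen⟩ := hG (σ w) v (fun h => hwv (by rw [← h, hσ])) (ℓ - Fintype.card V)
    (by omega) (by omega)
  have hcross : (G.doubleGraph σ).Adj (b, w) (b', σ w) := Or.inr ⟨hb, Or.inl rfl⟩
  exact ⟨crossWalk P hcross Q, isPath_crossWalk hb hP hQ, by rw [length_crossWalk]; omega⟩

lemma IsLongPathConnected.exists_isPath_doubleGraph_of_eq (hG : G.IsLongPathConnected)
    (hσ : σ.Involutive) (b : Bool) {u v : V} (huv : u ≠ v)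
    {ℓ : ℕ} (h₁ : 2 * Fintype.card V - 2 ≤ ℓ) (h₂ : ℓ ≤ 2 * Fintype.card V - 1) :
    ∃ p : (G.doubleGraph σ).Walk (b, u) (b, v), p.IsPath ∧ p.length = ℓ := by
  obtain ⟨_ | @⟨_, a, _, hua, P⟩, hP, hPlen⟩ := hG u v huv _ (by omega) le_rfl
  · exact absurd rfl huv
  rw [Walk.cons_isPath_iff] at hP
  obtain ⟨Q, hQ, hQlen⟩ := hG (σ u) (σ a) (hσ.injective.ne hua.ne) (ℓ - Fintype.card V)
    (by omega) (by omega)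
  have hback : (G.doubleGraph σ).Adj (!b, σ a) (b, a) := Or.inr ⟨by simp, Or.inr rfl⟩
  have hu : (b, u) ∉ (crossWalk Q hback P).support := by
    simp [support_crossWalk, hP.2]
  refine ⟨.cons doubleGraph.adj_cross (crossWalk Q hback P),
    (Walk.cons_isPath_iff _ _).2 ⟨isPath_crossWalk (by simp) hQ hP.1, hu⟩, ?_⟩
  simp only [Walk.length_cons, length_crossWalk] at hPlen ⊢
  omega

lemma IsLongPathConnected.doubleGraph (hG : G.IsLongPathConnected) (hσ : σ.Involutive)
    (hcard : 3 ≤ Fintype.card V) : (G.doubleGraph σ).IsLongPathConnected := by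
  rintro ⟨b, u⟩ ⟨b', v⟩ hne ℓ h₁ h₂
  rw [Fintype.card_prod, Fintype.card_bool, two_mul, ← two_mul] at h₁ h₂
  by_cases hb : b = b'
  · subst hb
    exact hG.exists_isPath_doubleGraph_of_eq hσ b (fun h => hne (by rw [h])) h₁ h₂
  · exact hG.exists_isPath_doubleGraph_of_ne hσ hcard hb u v h₁ h₂

/-- Depth-first search, through the candidate vertices `vs`, for the vertex list of a path of
length `k` from `u` to `v` avoiding `visited`. Nothing is proved about it: its output is checked. -/
def findPath? [DecidableEq V] (G : SimpleGraph V) [DecidableRel G.Adj] (vs : List V) :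
    ℕ → V → V → List V → Option (List V)
  | 0, u, v, _ => if u = v then some [u] else none
  | k + 1, u, v, visited => vs.findSome? fun w =>
      if G.Adj u w ∧ w ∉ visited then (findPath? G vs k w v (w :: visited)).map (u :: ·) else none

end SimpleGraph

open SimpleGraph

instance decidableVqAdj : ∀ (n : ℕ) (x y : Fin n → Bool), Decidable (vqAdj n x y)
  | 0, _, _ => .isFalse (by simp [vqAdj])
  | 1, x, y => by unfold vqAdj; infer_instance
  | n + 2, x, y => by
    have := decidableVqAdj (n + 1)
    unfold vqAdj vqCross
    infer_instance

instance (n : ℕ) : DecidableRel (varietalCube n).Adj := fun x y => by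
  rw [varietalCube, fromRel_adj]
  infer_instance

set_option maxRecDepth 100000 in
lemma isLongPathConnected_varietalCube_three : (varietalCube 3).IsLongPathConnected := by
  have hsearch : ∀ x y : Fin 3 → Bool, x ≠ y → ∀ ℓ ∈ [6, 7], ∃ l ∈
      ((varietalCube 3).findPath? ((List.range 8).map fun k i => k.testBit i) ℓ x y [x]).toList,
        l.IsChain (varietalCube 3).Adj ∧ l.head? = some x ∧ l.getLast? = some y ∧ l.Nodup ∧
          l.length = ℓ + 1 := by
    decide
  intro x y hxy ℓ h₁ h₂
  have hcard : Fintype.card (Fin 3 → Bool) = 8 := by simp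
  rw [hcard] at h₁ h₂
  obtain ⟨l, -, hchain, hx, hy, hnodup, hlen⟩ := hsearch x y hxy ℓ (by simp; omega)
  obtain ⟨p, hp, hplen⟩ := Walk.exists_isPath_of_isChain hchain hnodup hx hy
  exact ⟨p, hp, by omega⟩

/-- `VQ_{n+2}` joins `0u` to `1 (vqMatching n u)`. When `3 ∣ n + 2`, the relation `I` keeps the
bit at index `n` and adds it to the bit at index `n - 1`. -/
def vqMatching (n : ℕ) (u : Fin (n + 1) → Bool) : Fin (n + 1) → Bool :=
  if 3 ∣ n + 2 then fun i => if i.val = n - 1 then xor (u (Fin.last n)) (u i) else u i else u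

lemma vqMatching_involutive (n : ℕ) : (vqMatching n).Involutive := by
  intro u
  unfold vqMatching
  split_ifs with h3
  · have hlast : n ≠ n - 1 := by omega
    funext i
    by_cases hi : i.val = n - 1 <;> simp [hi, hlast]
  · rfl

lemma vqCross_iff {a b c d : Bool} : vqCross (a, b) (c, d) ↔ c = a ∧ d = xor a b := by
  cases a <;> cases b <;> cases c <;> cases d <;> simp [vqCross]

lemma vqAdj_of_eq {n : ℕ} {x y : Fin (n + 2) → Bool} (h : x (Fin.last _) = y (Fin.last _)) :
    vqAdj (n + 2) x y ↔ vqAdj (n + 1) (Fin.init x) (Fin.init y) := by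
  rw [vqAdj, if_pos h]
  rfl

lemma vqAdj_of_ne {n : ℕ} {x y : Fin (n + 2) → Bool} (h : x (Fin.last _) ≠ y (Fin.last _)) :
    vqAdj (n + 2) x y ↔ Fin.init y = vqMatching n (Fin.init x) := by
  rw [vqAdj, if_neg h, vqMatching, funext_iff]
  split_ifs with h3
  · rw [vqCross_iff]
    simp only [Fin.init]
    constructor
    · rintro ⟨hlow, hn, hn1⟩ i
      grind
    · intro h
      refine ⟨fun i hi => ?_, ?_, ?_⟩
      · exact ((h ⟨i, by omega⟩).trans (if_neg hi.ne)).symm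
      · exact (h (Fin.last n)).trans (if_neg (by simp only [Fin.val_last]; omega))
      · exact (h ⟨n - 1, by omega⟩).trans (if_pos rfl)
  · exact ⟨fun h i => (h i).symm, fun h i => (h i).symm⟩

lemma varietalCube_adj_iff {n : ℕ} {x y : Fin (n + 2) → Bool} :
    (varietalCube (n + 2)).Adj x y ↔ ((varietalCube (n + 1)).doubleGraph (vqMatching n)).Adj
      (x (Fin.last _), Fin.init x) (y (Fin.last _), Fin.init y) := by
  simp only [varietalCube, fromRel_adj, doubleGraph_adj]
  by_cases hl : x (Fin.last _) = y (Fin.last _)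
  · have hinit : x ≠ y ↔ Fin.init x ≠ Fin.init y := not_congr ⟨fun h => h ▸ rfl, fun h => by
      rw [← Fin.snoc_init_self x, ← Fin.snoc_init_self y, h, hl]⟩
    rw [vqAdj_of_eq hl, vqAdj_of_eq hl.symm, hinit]
    simp [hl]
  · have hxy : x ≠ y := fun h => hl (h ▸ rfl)
    rw [vqAdj_of_ne hl, vqAdj_of_ne (Ne.symm hl)]
    simp [hl, hxy]

def varietalCubeSuccSuccIso (n : ℕ) :
    varietalCube (n + 2) ≃g (varietalCube (n + 1)).doubleGraph (vqMatching n) where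
  toEquiv := (Fin.snocEquiv fun _ => Bool).symm
  map_rel_iff' := varietalCube_adj_iff.symm

lemma isLongPathConnected_varietalCube {n : ℕ} (hn : 3 ≤ n) :
    (varietalCube n).IsLongPathConnected := by
  induction n, hn using Nat.le_induction with
  | base => exact isLongPathConnected_varietalCube_three
  | succ n hn ih =>
    obtain ⟨m, rfl⟩ : ∃ m, n = m + 1 := ⟨n - 1, by omega⟩
    have hcard : 3 ≤ Fintype.card (Fin (m + 1) → Bool) := by
      rw [Fintype.card_fun, Fintype.card_bool, Fintype.card_fin]
      calc 3 ≤ 2 ^ 2 := by norm_num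
        _ ≤ 2 ^ (m + 1) := Nat.pow_le_pow_right (by norm_num) (by omega)
    exact (ih.doubleGraph (vqMatching_involutive m) hcard).of_iso (varietalCubeSuccSuccIso m).symm

/-- For `n ≥ 3` and distinct vertices `x, y` of `VQ_n`, there is an `xy`-path of
every length `ℓ` with `2^n - 2 ≤ ℓ ≤ 2^n - 1`; in particular there is a
Hamiltonian `xy`-path. -/
theorem stmt9 (n : ℕ) (hn : 3 ≤ n) (x y : Fin n → Bool) (hxy : x ≠ y) :
    (∀ ℓ : ℕ, 2 ^ n - 2 ≤ ℓ → ℓ ≤ 2 ^ n - 1 →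
      ∃ p : (varietalCube n).Walk x y, p.IsPath ∧ p.length = ℓ) ∧
    (∃ p : (varietalCube n).Walk x y, p.IsPath ∧ ∀ v : Fin n → Bool, v ∈ p.support) := by
  have hcard : Fintype.card (Fin n → Bool) = 2 ^ n := by simp
  have hG := isLongPathConnected_varietalCube hn x y hxy
  rw [hcard] at hG
  refine ⟨hG, ?_⟩
  obtain ⟨p, hp, hlen⟩ := hG (2 ^ n - 1) (by omega) le_rfl
  have hham : p.IsHamiltonian := Walk.isHamiltonian_iff_isPath_and_length_eq.2 ⟨hp, by omega⟩
  exact ⟨p, hp, hham.mem_support⟩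
end

section
/- Let VQ_n = L ⊙ R (n ≥ 2) with L = VQ^0_{n-1} and R = VQ^1_{n-1}, let x_L and y_L be two vertices in L, and let x_R and y_R be their unique neighbors in R, respectively. If n is not a multiple of 3, then the distance between x_L and y_L in the subgraph L equals the distance between x_R and y_R in the subgraph R; if n is a multiple of 3, then these two distances differ by at most 2. -/
/-!
Flipping the leading bit is an automorphism of `VQ_n`: adjacency depends on the two leading bits
only through whether they agree. It maps `L` isomorphically onto `R`, so it preserves distances.
If `3 ∤ n`, the neighbour of a vertex of `L` in `R` is exactly its flip, and the distances agree.
If `3 ∣ n`, the neighbour differs from the flip at most in the bit `x_{n-2}`; since `3 ∤ n - 2`,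
two vertices differing in exactly that bit are adjacent. So `x_R` and `y_R` lie within distance
`1` of the flips of `x_L` and `y_L`, and the triangle inequality gives the bound `2`.
-/

namespace SimpleGraph

variable {V W : Type*} {G : SimpleGraph V} {H : SimpleGraph W}

theorem Hom.edist_map_le (f : G →g H) (a b : V) : H.edist (f a) (f b) ≤ G.edist a b := by
  by_cases hr : G.Reachable a b
  · obtain ⟨p, hp⟩ := hr.exists_walk_length_eq_edist
    calc H.edist (f a) (f b) ≤ (p.map f).length := edist_le _
      _ = G.edist a b := by rw [Walk.length_map, hp]
  · simp [edist_eq_top_of_not_reachable hr]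

theorem Iso.dist_map (ψ : G ≃g H) (a b : V) : H.dist (ψ a) (ψ b) = G.dist a b :=
  congrArg ENat.toNat <| le_antisymm (ψ.toHom.edist_map_le a b)
    (by simpa using ψ.symm.toHom.edist_map_le (ψ a) (ψ b))

theorem dist_le_dist_add_two {a a' b b' : V} (ha : G.edist a a' ≤ 1) (hb : G.edist b b' ≤ 1) :
    G.dist a b ≤ G.dist a' b' + 2 := by
  have hreach {u v : V} (h : G.edist u v ≤ 1) : G.Reachable u v :=
    reachable_of_edist_ne_top (h.trans_lt ENat.one_lt_top).ne
  have hdist {u v : V} (h : G.edist u v ≤ 1) : G.dist u v ≤ 1 := ENat.toNat_le_of_le_natCast h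
  have h₁ := (hreach ha).dist_triangle_left b
  have h₂ := (hreach hb).symm.dist_triangle_right a'
  have := hdist ha
  have := hdist hb
  rw [dist_comm (u := b')] at h₂
  omega

end SimpleGraph

namespace VarietalCube

def flipLeading (m : ℕ) (v : Fin (m + 2) → Bool) : Fin (m + 2) → Bool :=
  Function.update v (Fin.last (m + 1)) (!v (Fin.last (m + 1)))

variable {m : ℕ}

@[simp]
theorem flipLeading_last (v : Fin (m + 2) → Bool) :
    flipLeading m v (Fin.last (m + 1)) = !v (Fin.last (m + 1)) := by
  simp [flipLeading]

theorem flipLeading_of_ne {i : Fin (m + 2)} (hi : i ≠ Fin.last (m + 1))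
    (v : Fin (m + 2) → Bool) :
    flipLeading m v i = v i :=
  Function.update_of_ne hi _ _

theorem flipLeading_of_lt {i : Fin (m + 2)} (hi : i.val < m + 1) (v : Fin (m + 2) → Bool) :
    flipLeading m v i = v i :=
  flipLeading_of_ne (Fin.ne_of_lt hi) v

theorem flipLeading_involutive (m : ℕ) : Function.Involutive (flipLeading m) := by
  intro v
  simp [flipLeading]

@[simp]
theorem flipLeading_castSucc (v : Fin (m + 2) → Bool) (i : Fin (m + 1)) :
    flipLeading m v i.castSucc = v i.castSucc :=
  flipLeading_of_lt i.castSucc_lt_last v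

theorem vqAdj_flipLeading_iff {u v : Fin (m + 2) → Bool} :
    vqAdj (m + 2) (flipLeading m u) (flipLeading m v) ↔ vqAdj (m + 2) u v := by
  have hlow {i : Fin (m + 2)} (hi : i.val < m - 1) (w : Fin (m + 2) → Bool) :
      flipLeading m w i = w i :=
    flipLeading_of_lt (by omega) w
  simp +contextual [vqAdj, flipLeading_of_lt, hlow]

theorem vqCross.fst_eq {p q : Bool × Bool} (h : vqCross p q) : p.1 = q.1 := by
  rcases h with ⟨rfl, rfl⟩ | ⟨rfl, rfl⟩ | ⟨rfl, rfl⟩ | ⟨rfl, rfl⟩ <;> rfl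

theorem vqAdj_of_forall_ne_eq :
    ∀ {n : ℕ} {k : Fin n}, ¬ 3 ∣ k.val + 1 → ∀ {u v : Fin n → Bool},
      u k ≠ v k → (∀ i, i ≠ k → u i = v i) → vqAdj n u v
  | 0, k, _, _, _, _, _ => k.elim0
  | 1, k, _, _, _, hne, _ => fun h => hne (congrFun h k)
  | n + 2, k, hk, u, v, hne, heq => by
    by_cases hlast : k = Fin.last (n + 1)
    · subst hlast
      rw [vqAdj, if_neg hne, if_neg (by simpa using hk)]
      exact fun i => heq _ (Fin.castSucc_lt_last i).ne
    · obtain ⟨k, rfl⟩ := Fin.exists_castSucc_eq.2 hlast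
      rw [vqAdj, if_pos (heq _ (Fin.castSucc_lt_last k).ne')]
      exact vqAdj_of_forall_ne_eq (k := k) hk hne
        fun i hi => heq _ (Fin.castSucc_injective _ |>.ne hi)

theorem eq_or_adj_of_forall_ne_eq {n : ℕ} {k : Fin n} (hk : ¬ 3 ∣ k.val + 1)
    {u v : Fin n → Bool} (heq : ∀ i, i ≠ k → u i = v i) :
    u = v ∨ (varietalCube n).Adj u v := by
  by_cases hk' : u k = v k
  · left
    funext i
    by_cases hi : i = k
    · rw [hi, hk']
    · exact heq i hi
  · exact .inr ⟨fun h => hk' (congrFun h k), .inl (vqAdj_of_forall_ne_eq hk hk' heq)⟩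

section Crossing

variable {u v : Fin (m + 2) → Bool}

theorem castSucc_eq_of_vqAdj_cross (hne : u (Fin.last (m + 1)) ≠ v (Fin.last (m + 1)))
    (h3 : ¬ 3 ∣ m + 2) (h : vqAdj (m + 2) u v) (i : Fin (m + 1)) :
    u i.castSucc = v i.castSucc := by
  rw [vqAdj, if_neg hne, if_neg h3] at h
  exact h i

theorem eq_of_vqAdj_cross (hne : u (Fin.last (m + 1)) ≠ v (Fin.last (m + 1)))
    (h3 : 3 ∣ m + 2) (h : vqAdj (m + 2) u v) (i : Fin (m + 2))
    (hi : i.val < m + 1) (hi' : i.val ≠ m - 1) : u i = v i := by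
  rw [vqAdj, if_neg hne, if_pos h3] at h
  obtain ⟨hlow, hcross⟩ := h
  rcases Nat.lt_or_ge i.val (m - 1) with hlt | hge
  · exact hlow i hlt
  · rw [show i = ⟨m, by omega⟩ from Fin.ext (by simp only; omega)]
    exact vqCross.fst_eq hcross

theorem flipLeading_eq_of_adj (hne : u (Fin.last (m + 1)) ≠ v (Fin.last (m + 1)))
    (h3 : ¬ 3 ∣ m + 2) (h : (varietalCube (m + 2)).Adj u v) :
    flipLeading m u = v := by
  have hlow (i : Fin (m + 1)) : u i.castSucc = v i.castSucc := by
    rcases h.2 with h | h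
    · exact castSucc_eq_of_vqAdj_cross hne h3 h i
    · exact (castSucc_eq_of_vqAdj_cross hne.symm h3 h i).symm
  funext i
  induction i using Fin.lastCases with
  | last => rw [flipLeading_last, Bool.not_eq_iff]; exact hne
  | cast i => simpa using hlow i

theorem flipLeading_eq_or_adj_of_adj (hne : u (Fin.last (m + 1)) ≠ v (Fin.last (m + 1)))
    (h3 : 3 ∣ m + 2) (h : (varietalCube (m + 2)).Adj u v) :
    flipLeading m u = v ∨ (varietalCube (m + 2)).Adj (flipLeading m u) v := by
  have hlow (i : Fin (m + 2)) (hi : i.val < m + 1) (hi' : i.val ≠ m - 1) : u i = v i := by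
    rcases h.2 with h | h
    · exact eq_of_vqAdj_cross hne h3 h i hi hi'
    · exact (eq_of_vqAdj_cross hne.symm h3 h i hi hi').symm
  refine eq_or_adj_of_forall_ne_eq (k := ⟨m - 1, by omega⟩) (by simp only; omega) fun i hi => ?_
  by_cases hlast : i = Fin.last (m + 1)
  · rw [hlast, flipLeading_last, Bool.not_eq_iff]
    exact hne
  · rw [flipLeading_of_ne hlast]
    exact hlow i (Fin.val_lt_last hlast) fun h => hi (Fin.ext h)

end Crossing

def flipLeadingIso (m : ℕ) : varietalCube (m + 2) ≃g varietalCube (m + 2) where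
  toEquiv := (flipLeading_involutive m).toPerm
  map_rel_iff' := by
    simp [varietalCube, (flipLeading_involutive m).injective.ne_iff, vqAdj_flipLeading_iff]

def halvesIso (m : ℕ) :
    (varietalCube (m + 2)).induce {v | v (Fin.last (m + 1)) = false} ≃g
      (varietalCube (m + 2)).induce {v | v (Fin.last (m + 1)) = true} :=
  (flipLeadingIso m).induce <| Set.InvOn.bijOn
    ⟨fun v _ => flipLeading_involutive m v, fun v _ => flipLeading_involutive m v⟩
    (fun v (hv : v _ = false) => show flipLeading m v _ = true by simp [hv])
    (fun v (hv : v _ = true) => show flipLeading m v _ = false by simp [hv])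

section Halves

variable (a : {v : Fin (m + 2) → Bool | v (Fin.last (m + 1)) = false})
  (b : {v : Fin (m + 2) → Bool | v (Fin.last (m + 1)) = true})

theorem leading_ne_of_mem_halves :
    a.1 (Fin.last (m + 1)) ≠ b.1 (Fin.last (m + 1)) :=
  fun e => Bool.false_ne_true (a.2.symm.trans (e.trans b.2))

theorem halvesIso_eq_of_adj (h3 : ¬ 3 ∣ m + 2) (h : (varietalCube (m + 2)).Adj a b) :
    halvesIso m a = b :=
  Subtype.ext <| flipLeading_eq_of_adj (leading_ne_of_mem_halves a b) h3 h

theorem edist_halvesIso_le_one (h3 : 3 ∣ m + 2) (h : (varietalCube (m + 2)).Adj a b) :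
    ((varietalCube (m + 2)).induce _).edist (halvesIso m a) b ≤ 1 := by
  rw [SimpleGraph.edist_le_one_iff_adj_or_eq, Subtype.ext_iff]
  exact (flipLeading_eq_or_adj_of_adj (leading_ne_of_mem_halves a b) h3 h).symm

end Halves

end VarietalCube

open SimpleGraph VarietalCube

/-- Let `VQ_n = L ⊙ R` (`n ≥ 2`), let `x_L, y_L ∈ L` and let `x_R, y_R ∈ R` be
their neighbors in `R`.  If `3 ∤ n` then `d_L(x_L, y_L) = d_R(x_R, y_R)`, and if
`3 ∣ n` these distances differ by at most `2`. -/
theorem stmt10 (n : ℕ) (hn : 2 ≤ n) (xL yL xR yR : Fin n → Bool)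
    (hxL : xL ⟨n - 1, by omega⟩ = false) (hyL : yL ⟨n - 1, by omega⟩ = false)
    (hxR : xR ⟨n - 1, by omega⟩ = true) (hyR : yR ⟨n - 1, by omega⟩ = true)
    (hx : (varietalCube n).Adj xL xR) (hy : (varietalCube n).Adj yL yR) :
    let L := (varietalCube n).induce {v : Fin n → Bool | v ⟨n - 1, by omega⟩ = false}
    let R := (varietalCube n).induce {v : Fin n → Bool | v ⟨n - 1, by omega⟩ = true}
    let dL := L.dist ⟨xL, hxL⟩ ⟨yL, hyL⟩
    let dR := R.dist ⟨xR, hxR⟩ ⟨yR, hyR⟩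
    (¬ 3 ∣ n → dL = dR) ∧ (3 ∣ n → dL ≤ dR + 2 ∧ dR ≤ dL + 2) := by
  obtain ⟨m, rfl⟩ : ∃ m, n = m + 2 := ⟨n - 2, by omega⟩
  intro L R dL dR
  have hdist : R.dist (halvesIso m ⟨xL, hxL⟩) (halvesIso m ⟨yL, hyL⟩) = dL :=
    (halvesIso m).dist_map _ _
  refine ⟨fun h3 => ?_, fun h3 => ?_⟩
  · rw [← hdist, halvesIso_eq_of_adj _ ⟨xR, hxR⟩ h3 hx,
      halvesIso_eq_of_adj _ ⟨yR, hyR⟩ h3 hy]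
  · have ex := edist_halvesIso_le_one ⟨xL, hxL⟩ ⟨xR, hxR⟩ h3 hx
    have ey := edist_halvesIso_le_one ⟨yL, hyL⟩ ⟨yR, hyR⟩ h3 hy
    rw [← hdist]
    refine ⟨dist_le_dist_add_two ex ey, dist_le_dist_add_two ?_ ?_⟩ <;>
      rwa [SimpleGraph.edist_comm]
end
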